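/- arXiv:2505.00286 — 3 statements merged into one kernel-verified Lean document; each statement's English description precedes it below -/
import Mathlib

section
/- Let R : Fin 4 → Fin 4 → Fin 4 → Fin 4 → ℝ (interpreted as components R^{βμ}{}_{γν}) satisfy: R β μ γ ν = −R μ β γ ν (antisymmetry in the first pair), R β μ γ ν = −R β μ ν γ (antisymmetry in the second pair), and the pair-exchange symmetry of the fully covariant tensor, i.e. ∑_{a,b} η β a · η μ b · R a b γ ν = ∑_{a,b} η γ a · η ν b · R a b β μ for all β, μ, γ, ν. Define the mixed Ricci tensor Ric^σ{}_α := ∑_{μ} R μ σ μ α, the scalar curvature Rs := ∑_{α} Ric^α{}_α, and the mixed Einstein tensor G^σ{}_α := Ric^σ{}_α − (1/2)·Rs·(if σ = α then 1 else 0). Then for all α and σ: (1/2)·∑_{β,μ,γ,ν,ρ} R β μ γ ν · ε(α,β,μ,ρ) · (−ε(σ,γ,ν,ρ)) = 2·G^σ{}_α. (In other words, the Einstein three-form E_α = −(1/2)Ω^{βμ}∧Σ_{αβμ} has components exactly 2G^σ_α Σ_σ, so its vanishing is equivalent to the vacuum Einstein equations.) -/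
open Finset

/-- The Minkowski frame metric on `Fin 4`: `η a b = -1` if `a = b = 0`, `1` if `a = b ≠ 0`,
and `0` otherwise. -/
def minkowski (a b : Fin 4) : ℝ :=
  if a = b then (if a = 0 then -1 else 1) else 0

/-- The Levi-Civita symbol on `Fin 4`: the sign of the permutation of `(0,1,2,3)` given by
`(a,b,c,d)` when `a, b, c, d` are pairwise distinct, and `0` otherwise. -/
noncomputable def leviCivita (a b c d : Fin 4) : ℝ :=
  if h : Function.Bijective ![a, b, c, d] then
    ((Equiv.Perm.sign (Equiv.ofBijective _ h) : ℤ) : ℝ)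
  else 0


lemma leviCivita_eq_sign (a b c d : Fin 4) (e : Equiv.Perm (Fin 4))
    (he : ![a,b,c,d] = ⇑e) :
    leviCivita a b c d = ((Equiv.Perm.sign e : ℤ) : ℝ) := by
  have hb : Function.Bijective ![a,b,c,d] := he ▸ e.bijective
  rw [leviCivita, dif_pos hb]
  have : Equiv.ofBijective _ hb = e := by
    ext x; rw [Equiv.ofBijective_apply, congrFun he x]
  rw [this]

lemma lc_z01 (a c d : Fin 4) : leviCivita a a c d = 0 := by
  refine dif_neg fun h => absurd (h.injective (show ![a,a,c,d] 0 = ![a,a,c,d] 1 from rfl)) (by decide)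
lemma lc_z02 (a b d : Fin 4) : leviCivita a b a d = 0 := by
  refine dif_neg fun h => absurd (h.injective (show ![a,b,a,d] 0 = ![a,b,a,d] 2 from rfl)) (by decide)
lemma lc_z03 (a b c : Fin 4) : leviCivita a b c a = 0 := by
  refine dif_neg fun h => absurd (h.injective (show ![a,b,c,a] 0 = ![a,b,c,a] 3 from rfl)) (by decide)
lemma lc_z12 (a b d : Fin 4) : leviCivita a b b d = 0 := by
  refine dif_neg fun h => absurd (h.injective (show ![a,b,b,d] 1 = ![a,b,b,d] 2 from rfl)) (by decide)
lemma lc_z13 (a b c : Fin 4) : leviCivita a b c b = 0 := by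
  refine dif_neg fun h => absurd (h.injective (show ![a,b,c,b] 1 = ![a,b,c,b] 3 from rfl)) (by decide)
lemma lc_z23 (a b c : Fin 4) : leviCivita a b c c = 0 := by
  refine dif_neg fun h => absurd (h.injective (show ![a,b,c,c] 2 = ![a,b,c,c] 3 from rfl)) (by decide)
lemma lc_v0123 : leviCivita 0 1 2 3 = 1 := by
  rw [leviCivita_eq_sign _ _ _ _ ((1 : Equiv.Perm (Fin 4))) (by decide)]
  simp
lemma lc_v0132 : leviCivita 0 1 3 2 = -1 := by
  rw [leviCivita_eq_sign _ _ _ _ (Equiv.swap (2:Fin 4) 3) (by decide)]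
  simp [Equiv.Perm.sign_swap']
lemma lc_v0213 : leviCivita 0 2 1 3 = -1 := by
  rw [leviCivita_eq_sign _ _ _ _ (Equiv.swap (1:Fin 4) 2) (by decide)]
  simp [Equiv.Perm.sign_swap']
lemma lc_v0231 : leviCivita 0 2 3 1 = 1 := by
  rw [leviCivita_eq_sign _ _ _ _ (Equiv.swap (1:Fin 4) 3 * Equiv.swap (1:Fin 4) 2) (by decide)]
  simp [Equiv.Perm.sign_swap']
lemma lc_v0312 : leviCivita 0 3 1 2 = 1 := by
  rw [leviCivita_eq_sign _ _ _ _ (Equiv.swap (1:Fin 4) 2 * Equiv.swap (1:Fin 4) 3) (by decide)]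
  simp [Equiv.Perm.sign_swap']
lemma lc_v0321 : leviCivita 0 3 2 1 = -1 := by
  rw [leviCivita_eq_sign _ _ _ _ (Equiv.swap (1:Fin 4) 3) (by decide)]
  simp [Equiv.Perm.sign_swap']
lemma lc_v1023 : leviCivita 1 0 2 3 = -1 := by
  rw [leviCivita_eq_sign _ _ _ _ (Equiv.swap (0:Fin 4) 1) (by decide)]
  simp [Equiv.Perm.sign_swap']
lemma lc_v1032 : leviCivita 1 0 3 2 = 1 := by
  rw [leviCivita_eq_sign _ _ _ _ (Equiv.swap (0:Fin 4) 1 * Equiv.swap (2:Fin 4) 3) (by decide)]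
  simp [Equiv.Perm.sign_swap']
lemma lc_v1203 : leviCivita 1 2 0 3 = 1 := by
  rw [leviCivita_eq_sign _ _ _ _ (Equiv.swap (0:Fin 4) 2 * Equiv.swap (0:Fin 4) 1) (by decide)]
  simp [Equiv.Perm.sign_swap']
lemma lc_v1230 : leviCivita 1 2 3 0 = -1 := by
  rw [leviCivita_eq_sign _ _ _ _ (Equiv.swap (0:Fin 4) 3 * Equiv.swap (0:Fin 4) 2 * Equiv.swap (0:Fin 4) 1) (by decide)]
  simp [Equiv.Perm.sign_swap']
lemma lc_v1302 : leviCivita 1 3 0 2 = -1 := by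
  rw [leviCivita_eq_sign _ _ _ _ (Equiv.swap (0:Fin 4) 2 * Equiv.swap (0:Fin 4) 3 * Equiv.swap (0:Fin 4) 1) (by decide)]
  simp [Equiv.Perm.sign_swap']
lemma lc_v1320 : leviCivita 1 3 2 0 = 1 := by
  rw [leviCivita_eq_sign _ _ _ _ (Equiv.swap (0:Fin 4) 3 * Equiv.swap (0:Fin 4) 1) (by decide)]
  simp [Equiv.Perm.sign_swap']
lemma lc_v2013 : leviCivita 2 0 1 3 = 1 := by
  rw [leviCivita_eq_sign _ _ _ _ (Equiv.swap (0:Fin 4) 1 * Equiv.swap (0:Fin 4) 2) (by decide)]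
  simp [Equiv.Perm.sign_swap']
lemma lc_v2031 : leviCivita 2 0 3 1 = -1 := by
  rw [leviCivita_eq_sign _ _ _ _ (Equiv.swap (0:Fin 4) 1 * Equiv.swap (0:Fin 4) 3 * Equiv.swap (0:Fin 4) 2) (by decide)]
  simp [Equiv.Perm.sign_swap']
lemma lc_v2103 : leviCivita 2 1 0 3 = -1 := by
  rw [leviCivita_eq_sign _ _ _ _ (Equiv.swap (0:Fin 4) 2) (by decide)]
  simp [Equiv.Perm.sign_swap']
lemma lc_v2130 : leviCivita 2 1 3 0 = 1 := by
  rw [leviCivita_eq_sign _ _ _ _ (Equiv.swap (0:Fin 4) 3 * Equiv.swap (0:Fin 4) 2) (by decide)]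
  simp [Equiv.Perm.sign_swap']
lemma lc_v2301 : leviCivita 2 3 0 1 = 1 := by
  rw [leviCivita_eq_sign _ _ _ _ (Equiv.swap (0:Fin 4) 2 * Equiv.swap (1:Fin 4) 3) (by decide)]
  simp [Equiv.Perm.sign_swap']
lemma lc_v2310 : leviCivita 2 3 1 0 = -1 := by
  rw [leviCivita_eq_sign _ _ _ _ (Equiv.swap (0:Fin 4) 3 * Equiv.swap (0:Fin 4) 1 * Equiv.swap (0:Fin 4) 2) (by decide)]
  simp [Equiv.Perm.sign_swap']
lemma lc_v3012 : leviCivita 3 0 1 2 = -1 := by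
  rw [leviCivita_eq_sign _ _ _ _ (Equiv.swap (0:Fin 4) 1 * Equiv.swap (0:Fin 4) 2 * Equiv.swap (0:Fin 4) 3) (by decide)]
  simp [Equiv.Perm.sign_swap']
lemma lc_v3021 : leviCivita 3 0 2 1 = 1 := by
  rw [leviCivita_eq_sign _ _ _ _ (Equiv.swap (0:Fin 4) 1 * Equiv.swap (0:Fin 4) 3) (by decide)]
  simp [Equiv.Perm.sign_swap']
lemma lc_v3102 : leviCivita 3 1 0 2 = 1 := by
  rw [leviCivita_eq_sign _ _ _ _ (Equiv.swap (0:Fin 4) 2 * Equiv.swap (0:Fin 4) 3) (by decide)]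
  simp [Equiv.Perm.sign_swap']
lemma lc_v3120 : leviCivita 3 1 2 0 = -1 := by
  rw [leviCivita_eq_sign _ _ _ _ (Equiv.swap (0:Fin 4) 3) (by decide)]
  simp [Equiv.Perm.sign_swap']
lemma lc_v3201 : leviCivita 3 2 0 1 = -1 := by
  rw [leviCivita_eq_sign _ _ _ _ (Equiv.swap (0:Fin 4) 2 * Equiv.swap (0:Fin 4) 1 * Equiv.swap (0:Fin 4) 3) (by decide)]
  simp [Equiv.Perm.sign_swap']
lemma lc_v3210 : leviCivita 3 2 1 0 = 1 := by
  rw [leviCivita_eq_sign _ _ _ _ (Equiv.swap (0:Fin 4) 3 * Equiv.swap (1:Fin 4) 2) (by decide)]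
  simp [Equiv.Perm.sign_swap']

lemma fin4_cases (x : Fin 4) : x = 0 ∨ x = 1 ∨ x = 2 ∨ x = 3 := by
  fin_cases x <;> simp

set_option maxHeartbeats 16000000 in
/-- Let `R β μ γ ν` be the components `R^{βμ}_{γν}` of the Riemann curvature
in an orthonormal frame, antisymmetric in each pair and with the pair-exchange symmetry of the
fully covariant tensor.  With the mixed Ricci tensor `Ric^σ_α = ∑_μ R μ σ μ α`, the scalar
curvature `Rs = ∑_α Ric^α_α`, and the mixed Einstein tensor
`G^σ_α = Ric^σ_α − ½ Rs δ^σ_α`, one has, for all `α σ`: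
`½ ∑_{β,μ,γ,ν,ρ} R β μ γ ν ⬝ ε(α,β,μ,ρ) ⬝ (−ε(σ,γ,ν,ρ)) = 2 G^σ_α`.
(The Einstein three-form `E_α = −½ Ω^{βμ} ∧ Σ_{αβμ}` has components exactly `2 G^σ_α Σ_σ`,
so its vanishing is equivalent to the vacuum Einstein equations.) -/
theorem einstein_form_components
    (R : Fin 4 → Fin 4 → Fin 4 → Fin 4 → ℝ)
    (h1 : ∀ β μ γ ν, R β μ γ ν = -R μ β γ ν)
    (h2 : ∀ β μ γ ν, R β μ γ ν = -R β μ ν γ)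
    (h3 : ∀ β μ γ ν, ∑ a, ∑ b, minkowski β a * minkowski μ b * R a b γ ν
        = ∑ a, ∑ b, minkowski γ a * minkowski ν b * R a b β μ)
    (Ric : Fin 4 → Fin 4 → ℝ) (hRic : ∀ σ α, Ric σ α = ∑ μ, R μ σ μ α)
    (Rs : ℝ) (hRs : Rs = ∑ α, Ric α α)
    (G : Fin 4 → Fin 4 → ℝ)
    (hG : ∀ σ α, G σ α = Ric σ α - (1/2 : ℝ) * Rs * (if σ = α then 1 else 0)) :
    ∀ α σ, (1/2 : ℝ) * ∑ β, ∑ μ, ∑ γ, ∑ ν, ∑ ρ,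
        R β μ γ ν * leviCivita α β μ ρ * (-leviCivita σ γ ν ρ) = 2 * G σ α := by
  intro α σ
  have e10 : ∀ c d, R 1 0 c d = -R 0 1 c d := fun c d => h1 1 0 c d
  have e20 : ∀ c d, R 2 0 c d = -R 0 2 c d := fun c d => h1 2 0 c d
  have e21 : ∀ c d, R 2 1 c d = -R 1 2 c d := fun c d => h1 2 1 c d
  have e30 : ∀ c d, R 3 0 c d = -R 0 3 c d := fun c d => h1 3 0 c d
  have e31 : ∀ c d, R 3 1 c d = -R 1 3 c d := fun c d => h1 3 1 c d
  have e32 : ∀ c d, R 3 2 c d = -R 2 3 c d := fun c d => h1 3 2 c d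
  have f10 : ∀ x y, R x y 1 0 = -R x y 0 1 := fun x y => h2 x y 1 0
  have f20 : ∀ x y, R x y 2 0 = -R x y 0 2 := fun x y => h2 x y 2 0
  have f21 : ∀ x y, R x y 2 1 = -R x y 1 2 := fun x y => h2 x y 2 1
  have f30 : ∀ x y, R x y 3 0 = -R x y 0 3 := fun x y => h2 x y 3 0
  have f31 : ∀ x y, R x y 3 1 = -R x y 1 3 := fun x y => h2 x y 3 1
  have f32 : ∀ x y, R x y 3 2 = -R x y 2 3 := fun x y => h2 x y 3 2
  have z1 : ∀ a c d, R a a c d = 0 := fun a c d => by linarith [h1 a a c d]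
  have z2 : ∀ a b c, R a b c c = 0 := fun a b c => by linarith [h2 a b c c]
  have s0201 : R 0 2 0 1 = R 0 1 0 2 := by have h := h3 0 2 0 1; simp [Fin.sum_univ_four, minkowski] at h; linarith
  have s0301 : R 0 3 0 1 = R 0 1 0 3 := by have h := h3 0 3 0 1; simp [Fin.sum_univ_four, minkowski] at h; linarith
  have s0302 : R 0 3 0 2 = R 0 2 0 3 := by have h := h3 0 3 0 2; simp [Fin.sum_univ_four, minkowski] at h; linarith
  have s1201 : R 1 2 0 1 = -R 0 1 1 2 := by have h := h3 1 2 0 1; simp [Fin.sum_univ_four, minkowski] at h; linarith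
  have s1202 : R 1 2 0 2 = -R 0 2 1 2 := by have h := h3 1 2 0 2; simp [Fin.sum_univ_four, minkowski] at h; linarith
  have s1203 : R 1 2 0 3 = -R 0 3 1 2 := by have h := h3 1 2 0 3; simp [Fin.sum_univ_four, minkowski] at h; linarith
  have s1301 : R 1 3 0 1 = -R 0 1 1 3 := by have h := h3 1 3 0 1; simp [Fin.sum_univ_four, minkowski] at h; linarith
  have s1302 : R 1 3 0 2 = -R 0 2 1 3 := by have h := h3 1 3 0 2; simp [Fin.sum_univ_four, minkowski] at h; linarith
  have s1303 : R 1 3 0 3 = -R 0 3 1 3 := by have h := h3 1 3 0 3; simp [Fin.sum_univ_four, minkowski] at h; linarith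
  have s1312 : R 1 3 1 2 = R 1 2 1 3 := by have h := h3 1 3 1 2; simp [Fin.sum_univ_four, minkowski] at h; linarith
  have s2301 : R 2 3 0 1 = -R 0 1 2 3 := by have h := h3 2 3 0 1; simp [Fin.sum_univ_four, minkowski] at h; linarith
  have s2302 : R 2 3 0 2 = -R 0 2 2 3 := by have h := h3 2 3 0 2; simp [Fin.sum_univ_four, minkowski] at h; linarith
  have s2303 : R 2 3 0 3 = -R 0 3 2 3 := by have h := h3 2 3 0 3; simp [Fin.sum_univ_four, minkowski] at h; linarith
  have s2312 : R 2 3 1 2 = R 1 2 2 3 := by have h := h3 2 3 1 2; simp [Fin.sum_univ_four, minkowski] at h; linarith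
  have s2313 : R 2 3 1 3 = R 1 3 2 3 := by have h := h3 2 3 1 3; simp [Fin.sum_univ_four, minkowski] at h; linarith

  simp only [hG, hRic, hRs]
  rcases fin4_cases α with rfl|rfl|rfl|rfl <;> rcases fin4_cases σ with rfl|rfl|rfl|rfl <;>
  · simp only [Fin.sum_univ_four, lc_z01, lc_z02, lc_z03, lc_z12, lc_z13, lc_z23, lc_v0123, lc_v0132, lc_v0213, lc_v0231, lc_v0312, lc_v0321, lc_v1023, lc_v1032, lc_v1203, lc_v1230, lc_v1302, lc_v1320, lc_v2013, lc_v2031, lc_v2103, lc_v2130, lc_v2301, lc_v2310, lc_v3012, lc_v3021, lc_v3102, lc_v3120, lc_v3201, lc_v3210]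
    norm_num
    simp only [z1, z2, e10, e20, e21, e30, e31, e32, f10, f20, f21, f30, f31, f32, s0201, s0301, s0302, s1201, s1202, s1203, s1301, s1302, s1303, s1312, s2301, s2302, s2303, s2312, s2313]
    try split_ifs with hif
    all_goals first | exact absurd hif (by decide) | ring
end

section
/- Let B : ℕ → X₁, θ : ℕ → X₂ and E : ℕ → X₂ be sequences such that for every n: ⟨θ(n+1) − θ(n), w⟩₂ = ⟨E(n), w⟩₂ for all w ∈ X₂, and ⟨B(n+1) − B(n), v⟩₁ = ⟨E(n), d₁ v⟩₂ for all v ∈ X₁. Then for every fixed u ∈ X₁ the discrete constraint 𝔠₁(n, u) := ⟨θ(n), d₁ u⟩₂ − ⟨B(n), u⟩₁ is stationary: 𝔠₁(n, u) = 𝔠₁(0, u) for all n ∈ ℕ. (This is the preservation of the first discrete Einstein constraint Σθ = B in the three-field ECDDR scheme.) -/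
/-- Abstract ECDDR three-field scheme: `X₀, X₁, X₂` are real vector spaces
with bilinear forms `⟨·,·⟩₁`, `⟨·,·⟩₂` (the discrete `L²`-products) and linear maps
`d₀ : X₀ → X₁`, `d₁ : X₁ → X₂` with `d₁ ∘ d₀ = 0`.  If the sequences `θ : ℕ → X₂`,
`B : ℕ → X₁`, `E : ℕ → X₂` satisfy, for every `n`,
`⟨θ (n+1) − θ n, w⟩₂ = ⟨E n, w⟩₂` for all `w` and
`⟨B (n+1) − B n, v⟩₁ = ⟨E n, d₁ v⟩₂` for all `v`,
then for every fixed `u ∈ X₁` the discrete constraint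
`𝔠₁(n, u) = ⟨θ n, d₁ u⟩₂ − ⟨B n, u⟩₁` is stationary: `𝔠₁(n, u) = 𝔠₁(0, u)` for all `n`. -/
theorem first_discrete_constraint_preservation
    {X₀ X₁ X₂ : Type*}
    [AddCommGroup X₀] [Module ℝ X₀]
    [AddCommGroup X₁] [Module ℝ X₁]
    [AddCommGroup X₂] [Module ℝ X₂]
    (ip1 : LinearMap.BilinForm ℝ X₁) (ip2 : LinearMap.BilinForm ℝ X₂)
    (d0 : X₀ →ₗ[ℝ] X₁) (d1 : X₁ →ₗ[ℝ] X₂)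
    (hcomplex : d1 ∘ₗ d0 = 0)
    (B : ℕ → X₁) (θ : ℕ → X₂) (E : ℕ → X₂)
    (hθ : ∀ n, ∀ w : X₂, ip2 (θ (n + 1) - θ n) w = ip2 (E n) w)
    (hB : ∀ n, ∀ v : X₁, ip1 (B (n + 1) - B n) v = ip2 (E n) (d1 v)) :
    ∀ (u : X₁) (n : ℕ),
      ip2 (θ n) (d1 u) - ip1 (B n) u = ip2 (θ 0) (d1 u) - ip1 (B 0) u := by
  intro u n
  induction n with
  | zero => rfl
  | succ n ih =>
    have h1 := hθ n (d1 u)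
    have h2 := hB n u
    simp only [map_sub, LinearMap.sub_apply] at h1 h2
    linarith
end

section
/- Let B : ℕ → X₁ and E : ℕ → X₂ be sequences such that for every n: ⟨B(n+1) − B(n), v⟩₁ = ⟨E(n), d₁ v⟩₂ for all v ∈ X₁. Then for every fixed p ∈ X₀ the discrete constraint 𝔠₂(n, p) := ⟨B(n), d₀ p⟩₁ is stationary: 𝔠₂(n, p) = 𝔠₂(0, p) for all n ∈ ℕ. (This is the preservation of the second discrete Einstein constraint ΣB = 0 in the three-field ECDDR scheme, an immediate consequence of d₁ ∘ d₀ = 0.) -/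
/-- Abstract ECDDR three-field scheme: `X₀, X₁, X₂` are real vector spaces
with bilinear forms `⟨·,·⟩₁`, `⟨·,·⟩₂` (the discrete `L²`-products) and linear maps
`d₀ : X₀ → X₁`, `d₁ : X₁ → X₂` with `d₁ ∘ d₀ = 0`.  If the sequences `B : ℕ → X₁` and
`E : ℕ → X₂` satisfy, for every `n`, `⟨B (n+1) − B n, v⟩₁ = ⟨E n, d₁ v⟩₂` for all `v`,
then for every fixed `p ∈ X₀` the discrete constraint `𝔠₂(n, p) = ⟨B n, d₀ p⟩₁` is
stationary: `𝔠₂(n, p) = 𝔠₂(0, p)` for all `n`.  (This is an immediate consequence of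
`d₁ ∘ d₀ = 0`.) -/
theorem second_discrete_constraint_preservation
    {X₀ X₁ X₂ : Type*}
    [AddCommGroup X₀] [Module ℝ X₀]
    [AddCommGroup X₁] [Module ℝ X₁]
    [AddCommGroup X₂] [Module ℝ X₂]
    (ip1 : LinearMap.BilinForm ℝ X₁) (ip2 : LinearMap.BilinForm ℝ X₂)
    (d0 : X₀ →ₗ[ℝ] X₁) (d1 : X₁ →ₗ[ℝ] X₂)
    (hcomplex : d1 ∘ₗ d0 = 0)
    (B : ℕ → X₁) (E : ℕ → X₂)
    (hB : ∀ n, ∀ v : X₁, ip1 (B (n + 1) - B n) v = ip2 (E n) (d1 v)) :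
    ∀ (p : X₀) (n : ℕ), ip1 (B n) (d0 p) = ip1 (B 0) (d0 p) := by
  intro p n
  induction n with
  | zero => rfl
  | succ n ih =>
    have h := hB n (d0 p)
    have hd : d1 (d0 p) = 0 := by
      have := congrArg (· p) hcomplex
      simpa using this
    rw [hd, map_zero, map_sub, LinearMap.sub_apply] at h
    linarith [ih]
end
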